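/- Dual energy-error identity (equation (4.8), second identity): Let (σ, cσ) and (τ, cτ) be curl pairs and f square-ν-integrable, and suppose the weak dual (magnetizing-field) equation holds against the difference: ∫ β⁻¹ cσ·(cτ − cσ) dν + ∫ μ σ·(τ − σ) dν = ∫ β⁻¹ f·(cτ − cσ) dν. Then 2 ( J*(σ) − J*(τ) ) = ∫ ( β⁻¹|cσ − cτ|² + μ|σ − τ|² ) dν = |||σ − τ|||²_{β,μ}, where J*(ρ) := −½ ∫ μ|ρ|² dν − ½ ∫ β⁻¹|f − cρ|² dν. -/

import Mathlib

open MeasureTheory RealInnerProductSpace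

/-!
Expanding `f - cτ = (f - cσ) + (cσ - cτ)` and `τ = σ + (τ - σ)` gives, pointwise,
`|cσ - cτ|² = |f - cτ|² - |f - cσ|² - 2 (cσ - f)·(cτ - cσ)` and
`|σ - τ|² = |τ|² - |σ|² - 2 σ·(τ - σ)`.
Weighting by `β⁻¹` and `μ` and integrating, the cross terms add up to exactly the two sides of
the weak equation tested with `τ - σ`, so they cancel and what remains is `2 (J*(σ) - J*(τ))`.
The weights are essentially bounded, so every term is integrable.
-/

theorem norm_sub_sq_eq_norm_sub_sq_sub_norm_sub_sq_sub_inner {E : Type*} [NormedAddCommGroup E]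
    [InnerProductSpace ℝ E] (f a b : E) :
    ‖a - b‖ ^ 2 = ‖f - b‖ ^ 2 - ‖f - a‖ ^ 2 - 2 * ⟪a - f, b - a⟫ := by
  have hsplit : f - b = (f - a) - (b - a) := by abel
  rw [hsplit, norm_sub_sq_real (f - a), norm_sub_rev a b, ← neg_sub a f, inner_neg_left, norm_neg]
  ring

section WeightedL2

variable {Ω E : Type*} [MeasurableSpace Ω] {ν : Measure Ω} [NormedAddCommGroup E]
  [InnerProductSpace ℝ E] {w : Ω → ℝ} {f g h : Ω → E}

theorem MeasureTheory.MemLp.integrable_inner (hg : MemLp g 2 ν) (hh : MemLp h 2 ν) :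
    Integrable (fun x => ⟪g x, h x⟫) ν :=
  (L2.integrable_inner (𝕜 := ℝ) (hg.toLp g) (hh.toLp h)).congr <| by
    filter_upwards [hg.coeFn_toLp, hh.coeFn_toLp] with x hgx hhx
    rw [hgx, hhx]

theorem MeasureTheory.MemLp.integrable_mul_inner (hw : MemLp w ⊤ ν) (hg : MemLp g 2 ν)
    (hh : MemLp h 2 ν) : Integrable (fun x => w x * ⟪g x, h x⟫) ν :=
  (hg.integrable_inner hh).mul_of_top_right hw

theorem MeasureTheory.MemLp.integrable_mul_norm_sq (hw : MemLp w ⊤ ν) (hg : MemLp g 2 ν) :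
    Integrable (fun x => w x * ‖g x‖ ^ 2) ν := by
  simpa only [real_inner_self_eq_norm_sq] using hw.integrable_mul_inner hg hg

theorem integral_mul_norm_sub_sq (hw : MemLp w ⊤ ν) (hf : MemLp f 2 ν) (hg : MemLp g 2 ν)
    (hh : MemLp h 2 ν) :
    ∫ x, w x * ‖g x - h x‖ ^ 2 ∂ν
      = ∫ x, w x * ‖f x - h x‖ ^ 2 ∂ν - ∫ x, w x * ‖f x - g x‖ ^ 2 ∂ν
        - 2 * (∫ x, w x * ⟪g x, h x - g x⟫ ∂ν - ∫ x, w x * ⟪f x, h x - g x⟫ ∂ν) := by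
  have hpointwise : ∀ x, w x * ‖g x - h x‖ ^ 2
      = w x * ‖f x - h x‖ ^ 2 - w x * ‖f x - g x‖ ^ 2
        - 2 * (w x * ⟪g x, h x - g x⟫ - w x * ⟪f x, h x - g x⟫) := fun x => by
    rw [norm_sub_sq_eq_norm_sub_sq_sub_norm_sub_sq_sub_inner (f x), inner_sub_left]
    ring
  have hhg : MemLp (fun x => h x - g x) 2 ν := hh.sub hg
  have hfh : MemLp (fun x => f x - h x) 2 ν := hf.sub hh
  have hfg : MemLp (fun x => f x - g x) 2 ν := hf.sub hg
  have hnorm_fh := hw.integrable_mul_norm_sq hfh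
  have hnorm_fg := hw.integrable_mul_norm_sq hfg
  have hinner_g := hw.integrable_mul_inner hg hhg
  have hinner_f := hw.integrable_mul_inner hf hhg
  simp_rw [hpointwise]
  rw [integral_sub (hnorm_fh.sub' hnorm_fg) ((hinner_g.sub' hinner_f).const_mul 2),
    integral_sub hnorm_fh hnorm_fg, integral_const_mul, integral_sub hinner_g hinner_f]

end WeightedL2

theorem dual_energy_error_identity_general
    {Ω : Type*} [MeasurableSpace Ω] (ν : MeasureTheory.Measure Ω)
    (μ β : Ω → ℝ) (m₁ m₂ b₁ b₂ : ℝ)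
    (hb₁ : 0 < b₁)
    (hμmeas : Measurable μ) (hβmeas : Measurable β)
    (hμbd : ∀ᵐ x ∂ν, m₁ ≤ μ x ∧ μ x ≤ m₂)
    (hβbd : ∀ᵐ x ∂ν, b₁ ≤ β x ∧ β x ≤ b₂)
    (σ cσ τ cτ f : Ω → EuclideanSpace ℝ (Fin 3))
    (hσ : MemLp σ 2 ν) (hcσ : MemLp cσ 2 ν)
    (hτ : MemLp τ 2 ν) (hcτ : MemLp cτ 2 ν)
    (hf : MemLp f 2 ν)
    (hweak : (∫ x, (β x)⁻¹ * ⟪cσ x, cτ x - cσ x⟫ ∂ν)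
           + (∫ x, μ x * ⟪σ x, τ x - σ x⟫ ∂ν)
           = ∫ x, (β x)⁻¹ * ⟪f x, cτ x - cσ x⟫ ∂ν) :
    2 * ((-(1 / 2) * (∫ x, μ x * ‖σ x‖ ^ 2 ∂ν)
            - (1 / 2) * (∫ x, (β x)⁻¹ * ‖f x - cσ x‖ ^ 2 ∂ν))
         - (-(1 / 2) * (∫ x, μ x * ‖τ x‖ ^ 2 ∂ν)
            - (1 / 2) * (∫ x, (β x)⁻¹ * ‖f x - cτ x‖ ^ 2 ∂ν)))
    = ∫ x, ((β x)⁻¹ * ‖cσ x - cτ x‖ ^ 2 + μ x * ‖σ x - τ x‖ ^ 2) ∂ν := by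
  have hμ : MemLp μ ⊤ ν := memLp_top_of_bound hμmeas.aestronglyMeasurable (max |m₁| |m₂|) <| by
    filter_upwards [hμbd] with x hx
    exact abs_le_max_abs_abs hx.1 hx.2
  have hβinv : MemLp (fun x => (β x)⁻¹) ⊤ ν :=
    memLp_top_of_bound hβmeas.inv.aestronglyMeasurable b₁⁻¹ <| by
      filter_upwards [hβbd] with x hx
      rw [norm_inv, Real.norm_of_nonneg (hb₁.trans_le hx.1).le]
      exact inv_anti₀ hb₁ hx.1
  have hcurl := integral_mul_norm_sub_sq hβinv hf hcσ hcτ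
  have hfield : ∫ x, μ x * ‖σ x - τ x‖ ^ 2 ∂ν
      = ∫ x, μ x * ‖τ x‖ ^ 2 ∂ν - ∫ x, μ x * ‖σ x‖ ^ 2 ∂ν
        - 2 * ∫ x, μ x * ⟪σ x, τ x - σ x⟫ ∂ν := by
    simpa using integral_mul_norm_sub_sq hμ (MemLp.zero (ε := EuclideanSpace ℝ (Fin 3))) hσ hτ
  have hcστ : MemLp (fun x => cσ x - cτ x) 2 ν := hcσ.sub hcτ
  have hστ : MemLp (fun x => σ x - τ x) 2 ν := hσ.sub hτ
  rw [integral_add (hβinv.integrable_mul_norm_sq hcστ) (hμ.integrable_mul_norm_sq hστ), hcurl,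
    hfield]
  linarith

/-- Dual energy-error identity (equation (4.8), second identity):
2 (J*(σ) − J*(τ)) = |||σ − τ|||²_{β,μ} whenever σ satisfies the weak dual
(magnetizing-field) equation tested against τ − σ. -/
theorem dual_energy_error_identity
    {Ω : Type*} [MeasurableSpace Ω] (ν : MeasureTheory.Measure Ω)
    (μ β : Ω → ℝ) (m₁ m₂ b₁ b₂ : ℝ)
    (hm₁ : 0 < m₁) (hm₁₂ : m₁ ≤ m₂) (hb₁ : 0 < b₁) (hb₁₂ : b₁ ≤ b₂)
    (hμmeas : Measurable μ) (hβmeas : Measurable β)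
    (hμbd : ∀ᵐ x ∂ν, m₁ ≤ μ x ∧ μ x ≤ m₂)
    (hβbd : ∀ᵐ x ∂ν, b₁ ≤ β x ∧ β x ≤ b₂)
    (σ cσ τ cτ f : Ω → EuclideanSpace ℝ (Fin 3))
    (hσ : MemLp σ 2 ν) (hcσ : MemLp cσ 2 ν)
    (hτ : MemLp τ 2 ν) (hcτ : MemLp cτ 2 ν)
    (hf : MemLp f 2 ν)
    (hweak : (∫ x, (β x)⁻¹ * ⟪cσ x, cτ x - cσ x⟫ ∂ν)
           + (∫ x, μ x * ⟪σ x, τ x - σ x⟫ ∂ν)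
           = ∫ x, (β x)⁻¹ * ⟪f x, cτ x - cσ x⟫ ∂ν) :
    2 * ((-(1 / 2) * (∫ x, μ x * ‖σ x‖ ^ 2 ∂ν)
            - (1 / 2) * (∫ x, (β x)⁻¹ * ‖f x - cσ x‖ ^ 2 ∂ν))
         - (-(1 / 2) * (∫ x, μ x * ‖τ x‖ ^ 2 ∂ν)
            - (1 / 2) * (∫ x, (β x)⁻¹ * ‖f x - cτ x‖ ^ 2 ∂ν)))
    = ∫ x, ((β x)⁻¹ * ‖cσ x - cτ x‖ ^ 2 + μ x * ‖σ x - τ x‖ ^ 2) ∂ν :=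
  dual_energy_error_identity_general ν μ β m₁ m₂ b₁ b₂ hb₁ hμmeas hβmeas hμbd hβbd σ cσ τ cτ f hσ
    hcσ hτ hcτ hf hweak
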